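/- arXiv:2106.01327 — 4 statements merged into one kernel-verified Lean document; each statement's English description precedes it below -/
import Mathlib

section
/- Let n > 3 be a squarefree positive integer with n ≡ 1 (mod 4). Then n is prime if and only if the number of pairs (x, y) ∈ ℕ × ℕ with n = 4x² + y² is odd (this set of pairs is finite). -/
/-!
The square roots of `-1` modulo `n` correspond to the representations `n = a² + b²` with `a` even
and `b > 0` via `(a, b) ↦ b / a`: every root arises this way by Thue's pigeonhole argument, and
the representation is unique because `n ∣ aa' + bb'` together with `|aa' + bb'| ≤ n` forces
`(a', b') = ±(a, b)`. Hence there are `2 · #{(x, y) | n = 4x² + y²}` roots. Modulo a prime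
`p ≡ 1 (mod 4)` there are exactly two, while for `n = mk` with coprime odd `m, k > 1` the Chinese
remainder theorem makes the number of roots a product of two even numbers (`s ↦ -s` has no fixed
points), so the number of pairs is even.
-/

open Function

theorem Function.Involutive.even_natCard {α : Type*} [Finite α] {f : α → α} (hf : Involutive f)
    (hne : ∀ x, f x ≠ x) : Even (Nat.card α) := by
  classical
  have := Fintype.ofFinite α
  have hmod := Equiv.Perm.card_fixedPoints_modEq (p := 2) (n := 1) (f := (f : Function.End α))
    (funext hf)
  have hfix : Fintype.card (fixedPoints f) = 0 := by
    rw [Fintype.card_eq_zero_iff]; exact ⟨fun x => hne x.1 x.2⟩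
  rw [hfix] at hmod
  rwa [Nat.even_iff, Nat.card_eq_fintype_card]

section SqrtNegOne

variable {R S : Type*} [Ring R] [Ring S]

theorem neg_ne_self_of_sq_eq_neg_one [Nontrivial R] (h2 : IsUnit (2 : R)) {x : R}
    (hx : x ^ 2 = -1) : -x ≠ x := by
  intro h
  have h2x : 2 * x = 0 := by rw [two_mul]; nth_rw 1 [← h]; exact neg_add_cancel x
  simp [h2.mul_right_eq_zero.mp h2x] at hx

theorem even_natCard_sq_eq_neg_one [Finite R] [Nontrivial R] (h2 : IsUnit (2 : R)) :
    Even (Nat.card {x : R // x ^ 2 = -1}) :=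
  Involutive.even_natCard (f := fun x => ⟨-x.1, by rw [neg_sq, x.2]⟩)
    (fun x => Subtype.ext (neg_neg x.1))
    (fun x h => neg_ne_self_of_sq_eq_neg_one h2 x.2 (congrArg Subtype.val h))

theorem natCard_sq_eq_neg_one_prod :
    Nat.card {x : R × S // x ^ 2 = -1} =
      Nat.card {x : R // x ^ 2 = -1} * Nat.card {x : S // x ^ 2 = -1} := by
  rw [← Nat.card_prod]
  exact Nat.card_congr <| (Equiv.subtypeEquivRight fun x => by simp [Prod.ext_iff]).trans
    (Equiv.subtypeProdEquivProd (p := fun a : R => a ^ 2 = -1) (q := fun b : S => b ^ 2 = -1))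

theorem RingEquiv.natCard_sq_eq_neg_one (e : R ≃+* S) :
    Nat.card {x : R // x ^ 2 = -1} = Nat.card {x : S // x ^ 2 = -1} :=
  Nat.card_congr <| e.toEquiv.subtypeEquiv fun x => by
    rw [RingEquiv.toEquiv_eq_coe, EquivLike.coe_coe, ← map_pow, ← map_one e, ← map_neg,
      e.injective.eq_iff]

end SqrtNegOne

theorem ZMod.isUnit_two_of_odd {m : ℕ} (hm : Odd m) : IsUnit (2 : ZMod m) := by
  exact_mod_cast (ZMod.isUnit_iff_coprime 2 m).mpr (Nat.coprime_two_left.mpr hm)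

theorem ZMod.natCard_sq_eq_neg_one_of_prime {p : ℕ} [Fact p.Prime] (hp : p % 4 = 1) :
    Nat.card {x : ZMod p // x ^ 2 = -1} = 2 := by
  obtain ⟨r, hr⟩ := ZMod.exists_sq_eq_neg_one_iff.mpr (by omega : p % 4 ≠ 3)
  have hr2 : r ^ 2 = -1 := by rw [sq, hr]
  have hroots : {x : ZMod p | x ^ 2 = -1} = {r, -r} := by
    ext x; simp [← hr2, sq_eq_sq_iff_eq_or_eq_neg]
  have h2 : IsUnit (2 : ZMod p) :=
    ZMod.isUnit_two_of_odd ((Fact.out : p.Prime).odd_of_ne_two (by omega))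
  change Nat.card {x : ZMod p | x ^ 2 = -1} = 2
  rw [Nat.card_coe_set_eq, hroots, Set.ncard_pair (neg_ne_self_of_sq_eq_neg_one h2 hr2).symm]

theorem ZMod.four_dvd_natCard_sq_eq_neg_one_of_coprime {m k : ℕ} (hmk : m.Coprime k)
    (hm : Odd m) (hk : Odd k) (hm1 : m ≠ 1) (hk1 : k ≠ 1) :
    4 ∣ Nat.card {x : ZMod (m * k) // x ^ 2 = -1} := by
  have := ZMod.nontrivial_iff.mpr hm1
  have := ZMod.nontrivial_iff.mpr hk1
  have : NeZero m := ⟨hm.pos.ne'⟩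
  have : NeZero k := ⟨hk.pos.ne'⟩
  rw [(ZMod.chineseRemainder hmk).natCard_sq_eq_neg_one, natCard_sq_eq_neg_one_prod]
  obtain ⟨a, ha⟩ := even_natCard_sq_eq_neg_one (ZMod.isUnit_two_of_odd hm)
  obtain ⟨b, hb⟩ := even_natCard_sq_eq_neg_one (ZMod.isUnit_two_of_odd hk)
  exact ⟨a * b, by rw [ha, hb]; ring⟩

theorem Squarefree.ne_sq {n : ℕ} (hsf : Squarefree n) (hn : n ≠ 1) (k : ℕ) : n ≠ k ^ 2 := by
  rintro rfl
  have hk : IsUnit k := hsf k ⟨1, by ring⟩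
  simp_all

theorem Squarefree.isCoprime_of_sq_add_sq_eq {n : ℕ} (hsf : Squarefree n) {a b : ℤ}
    (h : a ^ 2 + b ^ 2 = n) : IsCoprime a n := by
  have hab : IsCoprime a b := isRelPrime_iff_isCoprime.mp fun c hca hcb =>
    Int.squarefree_natCast.mpr hsf c <| by
      rw [← h, sq, sq]; exact dvd_add (mul_dvd_mul hca hca) (mul_dvd_mul hcb hcb)
  have := hab.pow_right (n := 2) |>.add_mul_left_right a
  rw [← h]
  simpa [sq, add_comm] using this

theorem Int.eq_of_sq_add_sq_eq_of_dvd {n a b c d : ℤ} (hab : a ^ 2 + b ^ 2 = n)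
    (hcd : c ^ 2 + d ^ 2 = n) (hb : 0 < b) (hd : 0 < d) (hne : a * c + b * d ≠ 0)
    (hdvd : n ∣ a * c + b * d) : a = c ∧ b = d := by
  obtain ⟨k, hk⟩ := hdvd
  have hk0 : k ≠ 0 := by rintro rfl; simp_all
  have hn : 0 < n := by nlinarith
  -- `2 |ac + bd| ≤ a² + b² + c² + d² = 2n`
  have hk1 : k ≤ 1 := by nlinarith [sq_nonneg (a - c), sq_nonneg (b - d)]
  have hk1' : -1 ≤ k := by nlinarith [sq_nonneg (a + c), sq_nonneg (b + d)]
  obtain rfl : k = 1 := by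
    obtain rfl | rfl : k = -1 ∨ k = 1 := by omega
    · nlinarith [sq_nonneg (a + c)]
    · rfl
  have hac : (a - c) ^ 2 = 0 := by nlinarith [sq_nonneg (a - c), sq_nonneg (b - d)]
  have hbd : (b - d) ^ 2 = 0 := by nlinarith [sq_nonneg (a - c), sq_nonneg (b - d)]
  constructor <;> linarith [pow_eq_zero_iff (n := 2) two_ne_zero |>.mp hac,
    pow_eq_zero_iff (n := 2) two_ne_zero |>.mp hbd]

theorem ZMod.exists_sq_add_sq_eq_of_sq_eq_neg_one {n : ℕ} [NeZero n] (hn : ∀ k, n ≠ k ^ 2)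
    {s : ZMod n} (hs : s ^ 2 = -1) : ∃ a b : ℤ, a ^ 2 + b ^ 2 = n ∧ (b : ZMod n) = s * a := by
  set k := Nat.sqrt n
  have hk : k ^ 2 < n := (Nat.sqrt_le' n).lt_of_ne (hn k).symm
  obtain ⟨⟨u, v⟩, ⟨u', v'⟩, hne, heq⟩ := Fintype.exists_ne_map_eq_of_card_lt
    (fun p : Fin (k + 1) × Fin (k + 1) => (p.2 : ZMod n) - s * p.1)
    (by simpa [ZMod.card, sq] using Nat.lt_succ_sqrt' n)
  have hbound : ∀ i j : Fin (k + 1), ((i : ℤ) - j) ^ 2 ≤ (k : ℤ) ^ 2 := fun i j => by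
    have := i.is_le; have := j.is_le
    exact sq_le_sq' (by omega) (by omega)
  have hpos : 0 < ((u : ℤ) - u') ^ 2 + ((v : ℤ) - v') ^ 2 := by
    by_contra! h
    refine hne (Prod.ext (Fin.ext ?_) (Fin.ext ?_)) <;>
      nlinarith [sq_nonneg ((u : ℤ) - u'), sq_nonneg ((v : ℤ) - v')]
  have hcong : (((v : ℤ) - v' : ℤ) : ZMod n) = s * ((u : ℤ) - u' : ℤ) := by
    push_cast; linear_combination heq
  refine ⟨(u : ℤ) - u', (v : ℤ) - v', ?_, hcong⟩
  have ha := hbound u u'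
  have hb := hbound v v'
  generalize (u : ℤ) - u' = a, (v : ℤ) - v' = b at *
  obtain ⟨c, hc⟩ : (n : ℤ) ∣ a ^ 2 + b ^ 2 := by
    rw [← ZMod.intCast_zmod_eq_zero_iff_dvd]; push_cast
    rw [hcong]; linear_combination (a : ZMod n) ^ 2 * hs
  have : ((k : ℕ) : ℤ) ^ 2 < n := by exact_mod_cast hk
  have hc1 : c = 1 := by nlinarith
  rw [hc, hc1, mul_one]

theorem Int.even_iff_odd_of_odd_sq_add_sq {a b : ℤ} (h : Odd (a ^ 2 + b ^ 2)) :
    Even a ↔ Odd b := by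
  rw [← Int.not_even_iff_odd] at h ⊢
  simp only [Int.even_add, Int.even_pow, ne_eq, OfNat.ofNat_ne_zero, not_false_eq_true,
    and_true] at h
  tauto

/-- For odd `n`, exactly one of the four rotations `±(a, b)`, `±(b, -a)` of a representation
`n = a² + b²` lies in this set. -/
def normalizedTwoSquareReps (n : ℕ) : Set (ℤ × ℤ) :=
  {p | p.1 ^ 2 + p.2 ^ 2 = n ∧ Even p.1 ∧ 0 < p.2}

namespace normalizedTwoSquareReps

variable {n : ℕ}

theorem odd_snd (hodd : Odd n) {p : ℤ × ℤ} (hp : p ∈ normalizedTwoSquareReps n) : Odd p.2 :=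
  (Int.even_iff_odd_of_odd_sq_add_sq (by rw [hp.1]; exact_mod_cast hodd)).mp hp.2.1

theorem exists_mem_of_sq_eq_neg_one [NeZero n] (hn : ∀ k, n ≠ k ^ 2) (hodd : Odd n) {s : ZMod n}
    (hs : s ^ 2 = -1) : ∃ p ∈ normalizedTwoSquareReps n, (p.2 : ZMod n) = s * p.1 := by
  have hsum_odd : ∀ a b : ℤ, a ^ 2 + b ^ 2 = n → Odd (a ^ 2 + b ^ 2) := fun a b h => by
    rw [h]; exact_mod_cast hodd
  have fix_sign : ∀ a b : ℤ, a ^ 2 + b ^ 2 = n → Even a → (b : ZMod n) = s * a →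
      ∃ p ∈ normalizedTwoSquareReps n, (p.2 : ZMod n) = s * p.1 := by
    intro a b hab ha hba
    have hb_odd : Odd b := (Int.even_iff_odd_of_odd_sq_add_sq (hsum_odd a b hab)).mp ha
    have hb : b ≠ 0 := by rintro rfl; simp at hb_odd
    rcases hb.lt_or_gt with hneg | hpos
    · exact ⟨(-a, -b), ⟨by simpa using hab, ha.neg, by omega⟩, by push_cast; rw [hba]; ring⟩
    · exact ⟨(a, b), ⟨hab, ha, hpos⟩, hba⟩
  obtain ⟨a, b, hab, hba⟩ := ZMod.exists_sq_add_sq_eq_of_sq_eq_neg_one hn hs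
  by_cases ha : Even a
  · exact fix_sign a b hab ha hba
  -- `(b, -a)` satisfies the same congruence since `s² = -1`
  have hba' : b ^ 2 + a ^ 2 = n := by linear_combination hab
  refine fix_sign b (-a) (by linear_combination hab)
    ((Int.even_iff_odd_of_odd_sq_add_sq (hsum_odd b a hba')).mpr (Int.not_even_iff_odd.mp ha)) ?_
  push_cast
  rw [hba]
  linear_combination (-(a : ZMod n)) * hs

theorem eq_of_mem (hodd : Odd n) {p q : ℤ × ℤ} (hp : p ∈ normalizedTwoSquareReps n)
    (hq : q ∈ normalizedTwoSquareReps n) {s : ZMod n} (hs : s ^ 2 = -1)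
    (hps : (p.2 : ZMod n) = s * p.1) (hqs : (q.2 : ZMod n) = s * q.1) : p = q := by
  have hne : p.1 * q.1 + p.2 * q.2 ≠ 0 := by
    rintro h
    simpa [h] using (hp.2.1.mul_right q.1).add_odd ((odd_snd hodd hp).mul (odd_snd hodd hq))
  have hdvd : (n : ℤ) ∣ p.1 * q.1 + p.2 * q.2 := by
    rw [← ZMod.intCast_zmod_eq_zero_iff_dvd]; push_cast
    rw [hps, hqs]; linear_combination (p.1 : ZMod n) * q.1 * hs
  obtain ⟨h1, h2⟩ := Int.eq_of_sq_add_sq_eq_of_dvd hp.1 hq.1 hp.2.2 hq.2.2 hne hdvd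
  exact Prod.ext h1 h2

theorem natCard_sq_eq_neg_one_eq_natCard (hsf : Squarefree n) (hn : n ≠ 1) (hodd : Odd n) :
    Nat.card {s : ZMod n // s ^ 2 = -1} = Nat.card (normalizedTwoSquareReps n) := by
  have : NeZero n := ⟨hsf.ne_zero⟩
  have hinv : ∀ p ∈ normalizedTwoSquareReps n, (p.1 : ZMod n) * (p.1 : ZMod n)⁻¹ = 1 :=
    fun p hp => ZMod.coe_int_mul_inv_eq_one (hsf.isCoprime_of_sq_add_sq_eq hp.1)
  have hsq : ∀ p ∈ normalizedTwoSquareReps n, ((p.2 : ZMod n) * (p.1 : ZMod n)⁻¹) ^ 2 = -1 := by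
    intro p hp
    have h0 := (ZMod.intCast_zmod_eq_zero_iff_dvd (p.1 ^ 2 + p.2 ^ 2) n).mpr (by rw [hp.1])
    push_cast at h0
    set u := (p.1 : ZMod n)⁻¹
    linear_combination u ^ 2 * h0 - ((p.1 : ZMod n) * u + 1) * hinv p hp
  have hrel : ∀ p ∈ normalizedTwoSquareReps n,
      (p.2 : ZMod n) = (p.2 * (p.1 : ZMod n)⁻¹) * p.1 := fun p hp => by
    linear_combination (-(p.2 : ZMod n)) * hinv p hp
  symm
  refine Nat.card_eq_of_bijective (fun p => ⟨p.1.2 * (p.1.1 : ZMod n)⁻¹, hsq p.1 p.2⟩) ⟨?_, ?_⟩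
  · rintro ⟨p, hp⟩ ⟨q, hq⟩ hpq
    have hqs : (q.2 : ZMod n) = (p.2 * (p.1 : ZMod n)⁻¹) * q.1 := by
      have hpq : (p.2 : ZMod n) * (p.1 : ZMod n)⁻¹ = q.2 * (q.1 : ZMod n)⁻¹ :=
        congrArg Subtype.val hpq
      rw [hpq]; exact hrel q hq
    exact Subtype.ext (eq_of_mem hodd hp hq (hsq p hp) (hrel p hp) hqs)
  · rintro ⟨s, hs⟩
    obtain ⟨p, hp, hps⟩ := exists_mem_of_sq_eq_neg_one (hsf.ne_sq hn) hodd hs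
    refine ⟨⟨p, hp⟩, Subtype.ext ?_⟩
    change (p.2 : ZMod n) * (p.1 : ZMod n)⁻¹ = s
    rw [hps]
    linear_combination s * hinv p hp

theorem units_mul_two_mul_mem (hodd : Odd n) {x y : ℕ} (h : n = 4 * x ^ 2 + y ^ 2) (ε : ℤˣ) :
    ((ε : ℤ) * (2 * x), (y : ℤ)) ∈ normalizedTwoSquareReps n := by
  have hε : (ε : ℤ) ^ 2 = 1 := by rw [← Units.val_pow_eq_pow_val, Int.units_sq, Units.val_one]
  have hy : y ≠ 0 := by
    rintro rfl; have := Nat.odd_iff.mp hodd; simp at h; omega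
  refine ⟨?_, (even_two_mul _).mul_left _, by omega⟩
  rw [h]; push_cast; linear_combination (2 * (x : ℤ)) ^ 2 * hε

theorem natCard_eq_two_mul_ncard (hn : ∀ k, n ≠ k ^ 2) (hodd : Odd n) :
    Nat.card (normalizedTwoSquareReps n) = 2 * {p : ℕ × ℕ | n = 4 * p.1 ^ 2 + p.2 ^ 2}.ncard := by
  set S := {p : ℕ × ℕ | n = 4 * p.1 ^ 2 + p.2 ^ 2}
  rw [← Nat.card_coe_set_eq, mul_comm, ← (by simp : Nat.card ℤˣ = 2), ← Nat.card_prod]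
  symm
  refine Nat.card_eq_of_bijective (fun q => ⟨_, units_mul_two_mul_mem hodd q.1.2 q.2⟩) ⟨?_, ?_⟩
  · rintro ⟨⟨⟨x, y⟩, hp⟩, ε⟩ ⟨⟨⟨x', y'⟩, hp'⟩, ε'⟩ h
    simp only [Subtype.mk.injEq, Prod.mk.injEq, Nat.cast_inj] at h
    obtain ⟨hx, rfl⟩ := h
    change n = 4 * x ^ 2 + y ^ 2 at hp
    change n = 4 * x' ^ 2 + y ^ 2 at hp'
    obtain rfl : x = x' := Nat.pow_left_injective two_ne_zero (show x ^ 2 = x' ^ 2 by omega)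
    have hx0 : (2 * x : ℤ) ≠ 0 := by
      have : x ≠ 0 := by rintro rfl; exact hn y (by simpa using hp)
      positivity
    rw [Units.ext (mul_right_cancel₀ hx0 hx)]
  · rintro ⟨⟨a, b⟩, hab, ⟨c, hc⟩, hb⟩
    dsimp only at hab hc hb
    obtain ⟨ε, hε⟩ : ∃ ε : ℤˣ, c = ε * c.natAbs := by
      rcases Int.natAbs_eq c with h | h
      · exact ⟨1, by simpa using h⟩
      · exact ⟨-1, by simpa using h⟩
    refine ⟨⟨⟨(c.natAbs, b.toNat), ?_⟩, ε⟩, ?_⟩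
    · change n = 4 * c.natAbs ^ 2 + b.toNat ^ 2
      zify
      rw [sq_abs, Int.toNat_of_nonneg hb.le, ← hab, hc]
      ring
    · refine Subtype.ext (Prod.ext ?_ (Int.toNat_of_nonneg hb.le))
      change (ε : ℤ) * (2 * c.natAbs) = a
      rw [hc]
      linear_combination (-2) * hε

end normalizedTwoSquareReps

/-- Atkin: a squarefree `n > 3` with `n ≡ 1 (mod 4)` is prime iff the
number of pairs `(x, y) ∈ ℕ × ℕ` with `n = 4x² + y²` is odd. -/
theorem atkin_one_mod_four (n : ℕ) (hn : 3 < n) (hsf : Squarefree n) (h4 : n % 4 = 1) :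
    n.Prime ↔ Odd {p : ℕ × ℕ | n = 4 * p.1 ^ 2 + p.2 ^ 2}.ncard := by
  have hodd : Odd n := Nat.odd_iff.mpr (by omega)
  have hn1 : n ≠ 1 := by omega
  have hcount : Nat.card {s : ZMod n // s ^ 2 = -1} =
      2 * {p : ℕ × ℕ | n = 4 * p.1 ^ 2 + p.2 ^ 2}.ncard := by
    rw [normalizedTwoSquareReps.natCard_sq_eq_neg_one_eq_natCard hsf hn1 hodd,
      normalizedTwoSquareReps.natCard_eq_two_mul_ncard (hsf.ne_sq hn1) hodd]
  constructor
  · intro hp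
    have := Fact.mk hp
    rw [ZMod.natCard_sq_eq_neg_one_of_prime h4] at hcount
    rw [show {p : ℕ × ℕ | n = 4 * p.1 ^ 2 + p.2 ^ 2}.ncard = 1 by omega]
    exact odd_one
  · intro hS
    by_contra hp
    obtain ⟨m, k, hm, hk, rfl⟩ := (Nat.not_prime_iff_exists_mul_eq (by omega)).mp hp
    obtain ⟨hm_odd, hk_odd⟩ := Nat.odd_mul.mp hodd
    have h4dvd := ZMod.four_dvd_natCard_sq_eq_neg_one_of_coprime
      (Nat.coprime_of_squarefree_mul hsf) hm_odd hk_odd (by rintro rfl; simp at hk)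
      (by rintro rfl; simp at hm)
    rw [hcount] at h4dvd
    obtain ⟨r, hr⟩ := hS
    omega
end

section
/- Let n be a squarefree positive integer with n ≡ 7 (mod 12). Then n is prime if and only if the number of pairs (x, y) ∈ ℕ × ℕ with n = 3x² + y² is odd (this set of pairs is finite). -/
lemma atkin_key1 (n a b c d : ℕ) (hn : 0 < n) (ha : n = 3*a^2+b^2) (hc : n = 3*c^2+d^2)
    (hdvd : (n:ℤ) ∣ (a:ℤ)*d - (b:ℤ)*c) : a*d = b*c ∧ 3*(a*c)+b*d = n := by
  have ha' : (n:ℤ) = 3*(a:ℤ)^2+(b:ℤ)^2 := by exact_mod_cast ha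
  have hc' : (n:ℤ) = 3*(c:ℤ)^2+(d:ℤ)^2 := by exact_mod_cast hc
  have hid : (n:ℤ)^2 = (3*(a:ℤ)*c+b*d)^2 + 3*((a:ℤ)*d-b*c)^2 := by
    linear_combination ((n:ℤ)) * ha' + (3*(a:ℤ)^2+(b:ℤ)^2) * hc'
  have he : (a:ℤ)*d - b*c = 0 := by
    by_contra h
    have h1 : (n:ℤ)^2 ≤ ((a:ℤ)*d - b*c)^2 := by
      have := Int.le_of_dvd (abs_pos.mpr h) ((dvd_abs _ _).mpr hdvd)
      calc (n:ℤ)^2 ≤ |(a:ℤ)*d - b*c|^2 := by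
            apply pow_le_pow_left₀ (by positivity) this
        _ = ((a:ℤ)*d - b*c)^2 := sq_abs _
    nlinarith [sq_nonneg (3*(a:ℤ)*c+b*d), (by exact_mod_cast hn : (0:ℤ) < n)]
  constructor
  · exact_mod_cast sub_eq_zero.mp he
  · have h2 : (3*(a*c)+b*d)^2 = n^2 := by
      have : ((3*(a*c)+b*d : ℕ):ℤ)^2 = ((n:ℕ):ℤ)^2 := by push_cast; rw [hid, he]; ring
      exact_mod_cast this
    exact Nat.pow_left_injective (by norm_num) h2

lemma atkin_key2 (n a b c d : ℕ) (hn : 0 < n) (ha : n = 3*a^2+b^2) (hc : n = 3*c^2+d^2)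
    (hdvd : n ∣ a*d + b*c) (ha0 : a ≠ 0) (hd0 : d ≠ 0) : False := by
  have ha' : (n:ℤ) = 3*(a:ℤ)^2+(b:ℤ)^2 := by exact_mod_cast ha
  have hc' : (n:ℤ) = 3*(c:ℤ)^2+(d:ℤ)^2 := by exact_mod_cast hc
  have hid : (n:ℤ)^2 = (3*(a:ℤ)*c-b*d)^2 + 3*((a:ℤ)*d+b*c)^2 := by
    linear_combination ((n:ℤ)) * ha' + (3*(a:ℤ)^2+(b:ℤ)^2) * hc'
  have he : a*d + b*c = 0 := by
    by_contra h
    have h0 : 0 < a*d + b*c := Nat.pos_of_ne_zero h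
    have h1' : (n:ℤ) ≤ (a:ℤ)*d + b*c := by exact_mod_cast Nat.le_of_dvd h0 hdvd
    nlinarith [sq_nonneg (3*(a:ℤ)*c-b*d), (by exact_mod_cast hn : (0:ℤ) < n)]
  rcases Nat.mul_eq_zero.mp (Nat.eq_zero_of_add_eq_zero_right he) with h' | h'
  · exact ha0 h'
  · exact hd0 h'


/-- facts about a representation of a squarefree n ≡ 7 mod 12 -/
lemma atkin_mem (n a b : ℕ) (hsf : Squarefree n) (h12 : n % 12 = 7)
    (ha : n = 3*a^2+b^2) : a ≠ 0 ∧ b ≠ 0 ∧ Nat.Coprime a b ∧ Nat.Coprime a n := by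
  have hn1 : n ≠ 1 := by omega
  have h3 : n % 3 = 1 := by omega
  have ha0 : a ≠ 0 := by
    rintro rfl
    have hb : b * b ∣ n := ⟨1, by rw [ha]; ring⟩
    have hb1 := Nat.isUnit_iff.mp (hsf b hb)
    rw [hb1] at ha; norm_num at ha; omega
  have hb0 : b ≠ 0 := by
    rintro rfl
    have : (3 : ℕ) ∣ n := ⟨a^2, by rw [ha]; ring⟩
    omega
  have hab : Nat.Coprime a b := by
    rw [Nat.coprime_iff_gcd_eq_one]
    by_contra h
    obtain ⟨q, hq, hqd⟩ := Nat.exists_prime_and_dvd h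
    have hqa : q ∣ a := hqd.trans (Nat.gcd_dvd_left _ _)
    have hqb : q ∣ b := hqd.trans (Nat.gcd_dvd_right _ _)
    have : q * q ∣ n := by
      rw [ha]
      obtain ⟨u, rfl⟩ := hqa; obtain ⟨v, rfl⟩ := hqb
      exact ⟨3*u^2+v^2, by ring⟩
    exact hq.not_isUnit (hsf q this)
  have han : Nat.Coprime a n := by
    rw [Nat.coprime_iff_gcd_eq_one]
    by_contra h
    obtain ⟨q, hq, hqd⟩ := Nat.exists_prime_and_dvd h
    have hqa : q ∣ a := hqd.trans (Nat.gcd_dvd_left _ _)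
    have hqn : q ∣ n := hqd.trans (Nat.gcd_dvd_right _ _)
    have hqb2 : q ∣ b^2 := by
      have h1 : q ∣ 3*a^2 := Dvd.dvd.mul_left (hqa.pow two_ne_zero) 3
      have h2 : b^2 = n - 3*a^2 := by omega
      rw [h2]; exact Nat.dvd_sub hqn h1
    have hqb : q ∣ b := hq.dvd_of_dvd_pow hqb2
    have : q * q ∣ n := by
      rw [ha]
      obtain ⟨u, rfl⟩ := hqa; obtain ⟨v, rfl⟩ := hqb
      exact ⟨3*u^2+v^2, by ring⟩
    exact hq.not_isUnit (hsf q this)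
  exact ⟨ha0, hb0, hab, han⟩

/-- Thue's lemma -/
lemma atkin_thue (m : ℕ) (hm : 1 < m) (s : ZMod m) :
    ∃ x y : ℤ, ¬(x = 0 ∧ y = 0) ∧ x^2 ≤ m ∧ y^2 ≤ m ∧ (y : ZMod m) = s * x := by
  have : NeZero m := ⟨by omega⟩
  set k := Nat.sqrt m with hk
  have hcard : Fintype.card (ZMod m) < ((Finset.range (k+1)) ×ˢ (Finset.range (k+1))).card := by
    rw [Finset.card_product, Finset.card_range, ZMod.card]
    have := Nat.lt_succ_sqrt' m
    nlinarith
  obtain ⟨p, hp, q, hq, hne, heq⟩ := Finset.exists_ne_map_eq_of_card_lt_of_maps_to hcard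
    (f := fun p : ℕ × ℕ => s * (p.1 : ZMod m) - (p.2 : ZMod m)) (fun a _ => Finset.mem_univ _)
  simp only [Finset.mem_product, Finset.mem_range] at hp hq
  refine ⟨(p.1:ℤ) - q.1, (p.2:ℤ) - q.2, ?_, ?_, ?_, ?_⟩
  · rintro ⟨h1, h2⟩
    apply hne
    have : p.1 = q.1 := by exact_mod_cast sub_eq_zero.mp h1
    have : p.2 = q.2 := by exact_mod_cast sub_eq_zero.mp h2
    exact Prod.ext (by omega) (by assumption)
  · have h1 : ((p.1:ℤ) - q.1)^2 ≤ (k:ℤ)^2 := by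
      have := hp.1; have := hq.1
      apply sq_le_sq' <;> [skip; skip] <;> push_cast <;> omega
    calc ((p.1:ℤ) - q.1)^2 ≤ (k:ℤ)^2 := h1
      _ ≤ m := by exact_mod_cast Nat.sqrt_le' m
  · have h1 : ((p.2:ℤ) - q.2)^2 ≤ (k:ℤ)^2 := by
      have := hp.2; have := hq.2
      apply sq_le_sq' <;> push_cast <;> omega
    calc ((p.2:ℤ) - q.2)^2 ≤ (k:ℤ)^2 := h1
      _ ≤ m := by exact_mod_cast Nat.sqrt_le' m
  · have : s * (p.1 : ZMod m) - (p.2 : ZMod m) = s * (q.1 : ZMod m) - (q.2 : ZMod m) := heq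
    push_cast
    linear_combination -this


lemma atkin_sign (n : ℕ) (s : ZMod n) (x z : ℤ)
    (h : ((x : ZMod n)) = s * (z : ZMod n) ∨ ((x : ZMod n)) = -(s * (z : ZMod n))) :
    ((x.natAbs : ℕ) : ZMod n) = s * (z.natAbs : ℕ) ∨
      ((x.natAbs : ℕ) : ZMod n) = -(s * (z.natAbs : ℕ)) := by
  have gx : ((x.natAbs : ℕ) : ZMod n) = (x : ZMod n) ∨
      ((x.natAbs : ℕ) : ZMod n) = -(x : ZMod n) := by
    rcases Int.natAbs_eq x with h' | h'
    · left; nth_rewrite 2 [h']; push_cast; rw [Int.abs_eq_natAbs, Int.cast_natCast]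
    · right; nth_rewrite 2 [h']; push_cast; rw [Int.abs_eq_natAbs, Int.cast_natCast, neg_neg]
  have gz : ((z.natAbs : ℕ) : ZMod n) = (z : ZMod n) ∨
      ((z.natAbs : ℕ) : ZMod n) = -(z : ZMod n) := by
    rcases Int.natAbs_eq z with h' | h'
    · left; nth_rewrite 2 [h']; push_cast; rw [Int.abs_eq_natAbs, Int.cast_natCast]
    · right; nth_rewrite 2 [h']; push_cast; rw [Int.abs_eq_natAbs, Int.cast_natCast, neg_neg]
  rcases gx with gx | gx <;> rcases gz with gz | gz <;> rcases h with h | h <;>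
    rw [gx, gz] <;>
    first
      | (left; linear_combination h)
      | (right; linear_combination h)
      | (left; linear_combination -h)
      | (right; linear_combination -h)

lemma atkin_surj (n : ℕ) (hsf : Squarefree n) (h12 : n % 12 = 7) (s : ZMod n) (hs : s^2 = -3) :
    ∃ a b : ℕ, n = 3*a^2+b^2 ∧
      ((b : ZMod n) = s * (a : ZMod n) ∨ (b : ZMod n) = -(s * (a : ZMod n))) := by
  have hn7 : 7 ≤ n := by omega
  have : NeZero n := ⟨by omega⟩
  obtain ⟨x, y, hxy, hx2, hy2, hcong⟩ := atkin_thue n (by omega) s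
  set m : ℤ := 3*x^2+y^2 with hm
  have hdvd : (n:ℤ) ∣ m := by
    rw [← ZMod.intCast_zmod_eq_zero_iff_dvd, hm]
    push_cast
    linear_combination (((y:ℤ) : ZMod n) + s * ((x:ℤ) : ZMod n)) * hcong + ((x:ℤ) : ZMod n)^2 * hs
  have hpos : 0 < m := by
    rcases not_and_or.mp hxy with h | h
    · have h1 : 0 < x^2 := lt_of_le_of_ne (sq_nonneg x) (Ne.symm (pow_ne_zero 2 h))
      nlinarith [sq_nonneg y]
    · have h1 : 0 < y^2 := lt_of_le_of_ne (sq_nonneg y) (Ne.symm (pow_ne_zero 2 h))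
      nlinarith [sq_nonneg x]
  have hnsq : ∀ t : ℤ, t^2 ≠ (n:ℤ) := by
    intro t ht
    have h1 : t.natAbs * t.natAbs = n := by
      have h2 : ((t.natAbs * t.natAbs : ℕ) : ℤ) = (n:ℤ) := by
        rw [Int.natAbs_mul_self]; linear_combination ht
      exact_mod_cast h2
    have h3 := Nat.isUnit_iff.mp (hsf t.natAbs ⟨1, by rw [Nat.mul_one]; exact h1.symm⟩)
    rw [h3] at h1
    omega
  have hni : (7:ℤ) ≤ (n:ℤ) := by exact_mod_cast hn7
  have hlt : m < 4*n := by
    rcases lt_or_eq_of_le (show m ≤ 4*n by rw [hm]; linarith) with h | h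
    · exact h
    · exfalso
      exact hnsq x (le_antisymm hx2 (by linarith))
  obtain ⟨k, hk⟩ := hdvd
  have hk1 : 1 ≤ k := by nlinarith
  have hk3 : k ≤ 3 := by nlinarith
  interval_cases k
  · -- m = n
    refine ⟨x.natAbs, y.natAbs, ?_, ?_⟩
    · have e1 : ((x.natAbs:ℤ))^2 = x^2 := by push_cast; exact sq_abs x
      have e2 : ((y.natAbs:ℤ))^2 = y^2 := by push_cast; exact sq_abs y
      have : (n:ℤ) = 3*(x.natAbs:ℤ)^2 + (y.natAbs:ℤ)^2 := by
        rw [e1, e2]; linarith [hk]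
      exact_mod_cast this
    · exact atkin_sign n s y x (Or.inl hcong)
  · -- m = 2n : impossible mod 4
    exfalso
    have h4 : ((m : ℤ) : ZMod 4) = 2 := by
      rw [hk]
      push_cast
      have hn4 : ((n:ℕ) : ZMod 4) = 3 := by
        have : ((n % 4 : ℕ) : ZMod 4) = ((n:ℕ) : ZMod 4) := ZMod.natCast_mod n 4
        rw [← this]; norm_num [show n % 4 = 3 by omega]
      rw [hn4]
      decide
    have : 3*((x:ℤ) : ZMod 4)^2 + ((y:ℤ) : ZMod 4)^2 = 2 := by
      rw [← h4, hm]; push_cast; ring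
    revert this
    generalize ((x:ℤ) : ZMod 4) = u; generalize ((y:ℤ) : ZMod 4) = v
    revert u v; decide
  · -- m = 3n
    have h3y : (3:ℤ) ∣ y := by
      have h1 : (3:ℤ) ∣ y^2 := ⟨n - x^2, by linarith⟩
      exact Int.prime_three.dvd_of_dvd_pow h1
    obtain ⟨z, rfl⟩ := h3y
    have hrep : (n:ℤ) = 3*z^2 + x^2 := by linarith
    refine ⟨z.natAbs, x.natAbs, ?_, ?_⟩
    · have e1 : ((z.natAbs:ℤ))^2 = z^2 := by push_cast; exact sq_abs z
      have e2 : ((x.natAbs:ℤ))^2 = x^2 := by push_cast; exact sq_abs x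
      have : (n:ℤ) = 3*(z.natAbs:ℤ)^2 + (x.natAbs:ℤ)^2 := by
        rw [e1, e2]; linarith
      exact_mod_cast this
    · apply atkin_sign
      right
      -- goal : ((x:ℤ) : ZMod n) = -(s * ((z:ℤ) : ZMod n))
      have hcong' : (3:ZMod n) * ((z:ℤ) : ZMod n) = s * ((x:ℤ) : ZMod n) := by
        have := hcong; push_cast at this; linear_combination this
      have h30 : (3:ZMod n) * (((x:ℤ) : ZMod n) + s * ((z:ℤ) : ZMod n)) = 0 := by
        linear_combination s * hcong' + ((x:ℤ) : ZMod n) * hs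
      have hu : IsUnit (3 : ZMod n) := by
        have hco : Nat.Coprime 3 n := (Nat.prime_three).coprime_iff_not_dvd.mpr (by omega)
        have := (ZMod.isUnit_iff_coprime 3 n).mpr hco
        simpa using this
      have := hu.mul_right_eq_zero.mp h30
      linear_combination this


section
variable (n : ℕ)

noncomputable def atkinPsi (p : ℕ × ℕ) : ZMod n := (p.2 : ZMod n) * (p.1 : ZMod n)⁻¹

lemma atkin_psi_spec (hsf : Squarefree n) (h12 : n % 12 = 7) (p : ℕ × ℕ)
    (hp : n = 3*p.1^2+p.2^2) :
    (p.2 : ZMod n) = atkinPsi n p * p.1 ∧ (atkinPsi n p)^2 = -3 := by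
  obtain ⟨-, -, -, han⟩ := atkin_mem n p.1 p.2 hsf h12 hp
  have hu : IsUnit ((p.1 : ℕ) : ZMod n) := (ZMod.isUnit_iff_coprime p.1 n).mpr han
  have hinv : ((p.1 : ℕ) : ZMod n) * ((p.1 : ℕ) : ZMod n)⁻¹ = 1 := ZMod.mul_inv_of_unit _ hu
  have h0 : (3:ZMod n)*((p.1:ℕ) : ZMod n)^2 + ((p.2:ℕ) : ZMod n)^2 = 0 := by
    have h1 : ((3*p.1^2+p.2^2 : ℕ) : ZMod n) = 0 := by rw [← hp]; exact ZMod.natCast_self n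
    push_cast at h1
    linear_combination h1
  constructor
  · unfold atkinPsi
    linear_combination -((p.2:ℕ) : ZMod n) * hinv
  · unfold atkinPsi
    linear_combination (((p.1:ℕ) : ZMod n)⁻¹)^2 * h0 -
      3*(((p.1:ℕ) : ZMod n) * ((p.1:ℕ) : ZMod n)⁻¹ + 1) * hinv

lemma atkin_inj (hsf : Squarefree n) (h12 : n % 12 = 7) (p q : ℕ × ℕ)
    (hp : n = 3*p.1^2+p.2^2) (hq : n = 3*q.1^2+q.2^2)
    (h : atkinPsi n p = atkinPsi n q) : p = q := by
  obtain ⟨hp1, hp2, hpab, -⟩ := atkin_mem n p.1 p.2 hsf h12 hp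
  obtain ⟨hq1, hq2, hqab, -⟩ := atkin_mem n q.1 q.2 hsf h12 hq
  obtain ⟨hψp, -⟩ := atkin_psi_spec n hsf h12 p hp
  obtain ⟨hψq, -⟩ := atkin_psi_spec n hsf h12 q hq
  rw [← h] at hψq
  have hmod : ((p.1*q.2 : ℕ) : ZMod n) = ((p.2*q.1 : ℕ) : ZMod n) := by
    push_cast
    rw [hψp, hψq]; ring
  have hdvd : (n:ℤ) ∣ (p.1:ℤ)*q.2 - (p.2:ℤ)*q.1 := by
    have := (Nat.ModEq.dvd ((ZMod.natCast_eq_natCast_iff _ _ _).mp hmod).symm)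
    push_cast at this ⊢
    exact this
  obtain ⟨heq, -⟩ := atkin_key1 n p.1 p.2 q.1 q.2 (by omega) hp hq hdvd
  have h11 : p.1 = q.1 := by
    have d1 : p.1 ∣ q.1 := by
      have e1 : p.1 ∣ q.1 * p.2 := ⟨q.2, by rw [heq, Nat.mul_comm]⟩
      exact Nat.Coprime.dvd_of_dvd_mul_right hpab e1
    have d2 : q.1 ∣ p.1 := by
      have e2 : q.1 ∣ p.1 * q.2 := ⟨p.2, by rw [heq, Nat.mul_comm]⟩
      exact Nat.Coprime.dvd_of_dvd_mul_right hqab e2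
    exact Nat.dvd_antisymm d1 d2
  have h22 : p.2 = q.2 := by
    rw [h11] at heq
    exact Nat.eq_of_mul_eq_mul_left (Nat.pos_of_ne_zero hq1)
      (by rw [Nat.mul_comm q.1 p.2, ← heq])
  exact Prod.ext h11 h22

lemma atkin_disj (hsf : Squarefree n) (h12 : n % 12 = 7) (p q : ℕ × ℕ)
    (hp : n = 3*p.1^2+p.2^2) (hq : n = 3*q.1^2+q.2^2)
    (h : atkinPsi n p = -atkinPsi n q) : False := by
  obtain ⟨hp1, hp2, -, -⟩ := atkin_mem n p.1 p.2 hsf h12 hp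
  obtain ⟨hq1, hq2, -, -⟩ := atkin_mem n q.1 q.2 hsf h12 hq
  obtain ⟨hψp, -⟩ := atkin_psi_spec n hsf h12 p hp
  obtain ⟨hψq, -⟩ := atkin_psi_spec n hsf h12 q hq
  rw [h] at hψp
  have hmod : ((q.1*p.2 + q.2*p.1 : ℕ) : ZMod n) = 0 := by
    push_cast
    rw [hψp, hψq]; ring
  have hdvd : n ∣ q.1*p.2 + q.2*p.1 := (ZMod.natCast_eq_zero_iff _ _).mp hmod
  exact atkin_key2 n q.1 q.2 p.1 p.2 (by omega) hq hp hdvd hq1 hp2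

lemma atkin_count (hsf : Squarefree n) (h12 : n % 12 = 7) :
    {s : ZMod n | s^2 = -3}.ncard = 2 * {p : ℕ × ℕ | n = 3*p.1^2+p.2^2}.ncard := by
  have : NeZero n := ⟨by omega⟩
  set S : Set (ℕ × ℕ) := {p : ℕ × ℕ | n = 3*p.1^2+p.2^2} with hS
  have hmemS : ∀ p : ℕ × ℕ, p ∈ S ↔ n = 3*p.1^2+p.2^2 := fun p => Iff.rfl
  have hR : {s : ZMod n | s^2 = -3} = atkinPsi n '' S ∪ (Neg.neg '' (atkinPsi n '' S)) := by
    apply Set.eq_of_subset_of_subset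
    · rintro s hs
      obtain ⟨a, b, hrep, hor⟩ := atkin_surj n hsf h12 s hs
      have hab : (a, b) ∈ S := hrep
      have hu : IsUnit ((a : ℕ) : ZMod n) :=
        (ZMod.isUnit_iff_coprime a n).mpr (atkin_mem n a b hsf h12 hrep).2.2.2
      have hinv : ((a : ℕ) : ZMod n) * ((a : ℕ) : ZMod n)⁻¹ = 1 := ZMod.mul_inv_of_unit _ hu
      rcases hor with hor | hor
      · left
        refine ⟨(a, b), hab, ?_⟩
        show ((b:ℕ) : ZMod n) * ((a:ℕ) : ZMod n)⁻¹ = s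
        rw [hor]; linear_combination s * hinv
      · right
        refine ⟨atkinPsi n (a, b), ⟨(a,b), hab, rfl⟩, ?_⟩
        show -atkinPsi n (a, b) = s
        have : atkinPsi n (a, b) = -s := by
          show ((b:ℕ) : ZMod n) * ((a:ℕ) : ZMod n)⁻¹ = -s
          rw [hor]; linear_combination -s * hinv
        rw [this, neg_neg]
    · rintro s (⟨p, hp, rfl⟩ | ⟨t, ⟨p, hp, rfl⟩, rfl⟩)
      · exact (atkin_psi_spec n hsf h12 p hp).2
      · show (-(atkinPsi n p))^2 = -3
        rw [neg_pow, (atkin_psi_spec n hsf h12 p hp).2]; ring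
  have hinj : Set.InjOn (atkinPsi n) S := fun p hp q hq h => atkin_inj n hsf h12 p q hp hq h
  have hdisj : Disjoint (atkinPsi n '' S) (Neg.neg '' (atkinPsi n '' S)) := by
    rw [Set.disjoint_left]
    rintro s ⟨p, hp, rfl⟩ ⟨t, ⟨q, hq, rfl⟩, hneg⟩
    exact atkin_disj n hsf h12 p q hp hq hneg.symm
  rw [hR, Set.ncard_union_eq hdisj (Set.toFinite _) (Set.toFinite _),
    Set.ncard_image_of_injective _ neg_injective, Set.ncard_image_of_injOn hinj]
  ring
end


lemma atkin_prime_roots (n : ℕ) (hp : n.Prime) (h12 : n % 12 = 7) :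
    {s : ZMod n | s^2 = -3}.ncard = 2 := by
  haveI : Fact n.Prime := ⟨hp⟩
  haveI : NeZero n := ⟨by omega⟩
  have h3 : (3:ℕ) ∣ Fintype.card (ZMod n)ˣ := by
    rw [ZMod.card_units_eq_totient, Nat.totient_prime hp]
    omega
  haveI : Fact (Nat.Prime 3) := ⟨Nat.prime_three⟩
  obtain ⟨u, hu⟩ := exists_prime_orderOf_dvd_card 3 h3
  set ω : ZMod n := (u : ZMod n) with hω
  have hω3 : ω^3 = 1 := by
    have := pow_orderOf_eq_one u
    rw [hu] at this
    have : ((u^3 : (ZMod n)ˣ) : ZMod n) = ((1 : (ZMod n)ˣ) : ZMod n) := by rw [this]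
    simpa using this
  have hω1 : ω ≠ 1 := by
    intro h
    have : u = 1 := Units.ext (by simpa [hω] using h)
    rw [this] at hu
    simp at hu
  have hsum : ω^2 + ω + 1 = 0 := by
    have h0 : (ω - 1) * (ω^2 + ω + 1) = 0 := by linear_combination hω3
    rcases mul_eq_zero.mp h0 with h | h
    · exact absurd (sub_eq_zero.mp h) hω1
    · exact h
  set s : ZMod n := 2*ω + 1 with hs
  have hs2 : s^2 = -3 := by rw [hs]; linear_combination 4*hsum
  have hs0 : s ≠ 0 := by
    intro h
    rw [h] at hs2
    have h30 : (3 : ZMod n) = 0 := by linear_combination hs2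
    have : (n:ℕ) ∣ 3 := by
      have : ((3:ℕ) : ZMod n) = 0 := by exact_mod_cast h30
      exact (ZMod.natCast_eq_zero_iff 3 n).mp this
    have := Nat.le_of_dvd (by norm_num) this
    omega
  have hsne : s ≠ -s := by
    intro h
    have h2 : (2 : ZMod n) * s = 0 := by linear_combination h
    rcases mul_eq_zero.mp h2 with h' | h'
    · have : (n:ℕ) ∣ 2 := by
        have : ((2:ℕ) : ZMod n) = 0 := by exact_mod_cast h'
        exact (ZMod.natCast_eq_zero_iff 2 n).mp this
      have := Nat.le_of_dvd (by norm_num) this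
      omega
    · exact hs0 h'
  have hR : {t : ZMod n | t^2 = -3} = {s, -s} := by
    ext t
    simp only [Set.mem_setOf_eq, Set.mem_insert_iff, Set.mem_singleton_iff]
    constructor
    · intro ht
      have h0 : (t - s) * (t + s) = 0 := by linear_combination ht - hs2
      rcases mul_eq_zero.mp h0 with h | h
      · left; linear_combination h
      · right; linear_combination h
    · rintro (rfl | rfl)
      · exact hs2
      · rw [neg_pow]; simp [hs2]
  rw [hR]
  exact Set.ncard_pair hsne

lemma atkin_even_roots (m : ℕ) (h1 : 1 < m) (h2 : ¬ 2 ∣ m) (h3 : ¬ (3:ℕ) ∣ m) :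
    Even {s : ZMod m | s^2 = -3}.ncard := by
  haveI : NeZero m := ⟨by omega⟩
  have hcard : {s : ZMod m | s^2 = -3}.ncard = Fintype.card {s : ZMod m // s^2 = -3} := by
    rw [← Nat.card_coe_set_eq, Nat.card_eq_fintype_card]
    exact Fintype.card_congr (Equiv.refl _)
  rw [hcard]
  set f : Function.End {s : ZMod m // s^2 = -3} :=
    fun s => ⟨-s.1, by rw [neg_pow]; simp [s.2]⟩ with hf
  haveI : Fact (Nat.Prime 2) := ⟨Nat.prime_two⟩
  have hf2 : f^(2^1) = 1 := by
    have : f * f = 1 := by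
      funext s
      show f (f s) = s
      apply Subtype.ext
      show -(-(s.1)) = s.1
      rw [neg_neg]
    rw [show (2:ℕ)^1 = 2 by norm_num, sq, this]
  have hmod := Equiv.Perm.card_fixedPoints_modEq hf2
  have hfix : Fintype.card ↑(Function.fixedPoints f) = 0 := by
    rw [Fintype.card_eq_zero_iff]
    constructor
    rintro ⟨⟨s, hs⟩, hfx⟩
    have h0 : -s = s := congrArg Subtype.val hfx
    have hs0 : (2 : ZMod m) * s = 0 := by linear_combination -h0
    have hu2 : IsUnit (2 : ZMod m) := by
      have := (ZMod.isUnit_iff_coprime 2 m).mpr (Nat.Prime.coprime_iff_not_dvd Nat.prime_two |>.mpr h2)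
      simpa using this
    have hsz : s = 0 := hu2.mul_right_eq_zero.mp hs0
    rw [hsz] at hs
    have h30 : ((3:ℕ) : ZMod m) = 0 := by
      push_cast
      linear_combination hs
    have hd3 : m ∣ 3 := (ZMod.natCast_eq_zero_iff 3 m).mp h30
    rcases (Nat.dvd_prime Nat.prime_three).mp hd3 with rfl | rfl
    · omega
    · exact h3 dvd_rfl
  rw [hfix] at hmod
  exact (Nat.modEq_zero_iff_dvd.mp hmod).elim (fun k hk => ⟨k, by omega⟩)


lemma atkin_crt (p m : ℕ) (hco : p.Coprime m) :
    {s : ZMod (p*m) | s^2 = -3}.ncard =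
      {s : ZMod p | s^2 = -3}.ncard * {s : ZMod m | s^2 = -3}.ncard := by
  rw [← Nat.card_coe_set_eq, ← Nat.card_coe_set_eq, ← Nat.card_coe_set_eq,
    ← Nat.card_prod]
  apply Nat.card_congr
  set e := ZMod.chineseRemainder hco with he
  have key : ∀ s : ZMod (p*m), s^2 = -3 ↔ ((e s).1^2 = -3 ∧ (e s).2^2 = -3) := by
    intro s
    have h1 : s^2 = -3 ↔ e (s^2) = e (-3) := ⟨fun h => by rw [h], fun h => e.injective h⟩
    rw [h1, map_pow, map_neg, map_ofNat, Prod.ext_iff]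
    simp [Prod.pow_fst, Prod.pow_snd]
  exact (e.toEquiv.subtypeEquiv key).trans (Equiv.subtypeProdEquivProd)

/-- Atkin: a squarefree `n` with `n ≡ 7 (mod 12)` is prime iff the
number of pairs `(x, y) ∈ ℕ × ℕ` with `n = 3x² + y²` is odd. -/
theorem atkin_seven_mod_twelve (n : ℕ) (hsf : Squarefree n) (h12 : n % 12 = 7) :
    n.Prime ↔ Odd {p : ℕ × ℕ | n = 3 * p.1 ^ 2 + p.2 ^ 2}.ncard := by
  have hcount := atkin_count n hsf h12
  constructor
  · intro hp
    have h2 := atkin_prime_roots n hp h12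
    have h1 : {p : ℕ × ℕ | n = 3 * p.1 ^ 2 + p.2 ^ 2}.ncard = 1 := by
      have := hcount.symm.trans h2
      omega
    rw [h1]
    exact odd_one
  · intro hodd
    by_contra hnp
    obtain ⟨p, hp, hdvd⟩ := Nat.exists_prime_and_dvd (show n ≠ 1 by omega)
    set m := n / p with hm
    have hn : n = p * m := (Nat.mul_div_cancel' hdvd).symm
    have hm0 : m ≠ 0 := by
      intro h; rw [h, Nat.mul_zero] at hn; omega
    have hm1 : m ≠ 1 := by
      intro h; rw [h, Nat.mul_one] at hn; exact hnp (hn ▸ hp)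
    have hndvd2 : ¬ 2 ∣ n := by omega
    have hndvd3 : ¬ 3 ∣ n := by omega
    have h2p : ¬ 2 ∣ p := fun h => hndvd2 (h.trans hdvd)
    have h3p : ¬ 3 ∣ p := fun h => hndvd3 (h.trans hdvd)
    have hmdvd : m ∣ n := ⟨p, by rw [hn]; ring⟩
    have h2m : ¬ 2 ∣ m := fun h => hndvd2 (h.trans hmdvd)
    have h3m : ¬ 3 ∣ m := fun h => hndvd3 (h.trans hmdvd)
    have hco : p.Coprime m := by
      rw [hp.coprime_iff_not_dvd]
      intro hdm
      obtain ⟨k, hk⟩ := hdm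
      have : p * p ∣ n := ⟨k, by rw [hn, hk]; ring⟩
      have := Nat.isUnit_iff.mp (hsf p this)
      exact hp.ne_one this
    have hcrt : {s : ZMod n | s^2 = -3}.ncard =
        {s : ZMod p | s^2 = -3}.ncard * {s : ZMod m | s^2 = -3}.ncard := by
      rw [hn] at *
      exact atkin_crt p m hco
    obtain ⟨a, ha⟩ := atkin_even_roots p hp.one_lt h2p h3p
    have hm2 : 1 < m := Nat.lt_of_le_of_ne (Nat.one_le_iff_ne_zero.mpr hm0) (Ne.symm hm1)
    obtain ⟨b, hb⟩ := atkin_even_roots m hm2 h2m h3m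
    obtain ⟨c, hc⟩ := hodd
    have h4 : 2 * {q : ℕ × ℕ | n = 3 * q.1 ^ 2 + q.2 ^ 2}.ncard = 4 * (a * b) := by
      rw [← hcount, hcrt, ha, hb]; ring
    obtain ⟨d, h5⟩ : ∃ d, 2 * {q : ℕ × ℕ | n = 3 * q.1 ^ 2 + q.2 ^ 2}.ncard = 4*d := ⟨a*b, h4⟩
    omega
end

section
/- For every q ∈ ℕ, W_{q+1} = ( ⋃_{x=0}^{p_{q+1}−1} { w + x·Π_q : w ∈ W_q } ) \ { p_{q+1}·y : y ∈ ℕ, 1 ≤ y ≤ Π_q − 1 }. -/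
/-- `nthPrime q` is `p_q`, the `q`-th prime (`p_0 = 2`, `p_1 = 3`, …). -/
noncomputable def nthPrime (q : ℕ) : ℕ := Nat.nth Nat.Prime q

/-- `Π_q = ∏_{k=0}^{q} p_k`. -/
noncomputable def primorialQ (q : ℕ) : ℕ := ∏ k ∈ Finset.range (q + 1), nthPrime k

/-- `W_q = {x : 1 ≤ x ≤ Π_q − 1, gcd(x, Π_q) = 1}`. -/
def wheelW (q : ℕ) : Set ℕ :=
  {x | 1 ≤ x ∧ x ≤ primorialQ q - 1 ∧ Nat.gcd x (primorialQ q) = 1}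

lemma primorialQ_two_le (q : ℕ) : 2 ≤ primorialQ q := by
  have h0 : nthPrime 0 ≤ primorialQ q := by
    apply Finset.single_le_prod' (f := nthPrime)
    · intro i _; exact (Nat.prime_nth_prime i).one_lt.le.trans' (by norm_num)
    · simp
  have h2 : 2 ≤ nthPrime 0 := (Nat.prime_nth_prime 0).two_le
  omega

/-- wheel turn: for every `q`,
`W_{q+1} = (⋃_{x=0}^{p_{q+1}−1} (W_q + x·Π_q)) \ p_{q+1}·⟦1, Π_q−1⟧`. -/
theorem wheel_turn (q : ℕ) :
    wheelW (q + 1) =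
      (⋃ x ∈ Set.Iio (nthPrime (q + 1)), (fun w => w + x * primorialQ q) '' wheelW q) \
        ((fun y => nthPrime (q + 1) * y) '' Set.Icc 1 (primorialQ q - 1)) := by
  set P := primorialQ q with hPdef
  set p := nthPrime (q + 1) with hpdef
  have hp : p.Prime := Nat.prime_nth_prime _
  have hP2 : 2 ≤ P := primorialQ_two_le q
  have hP : 0 < P := by omega
  have hsucc : primorialQ (q + 1) = P * p := Finset.prod_range_succ nthPrime (q + 1)
  ext n
  simp only [wheelW, Set.mem_diff, Set.mem_iUnion, Set.mem_image, Set.mem_setOf_eq,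
    Set.mem_Iio, Set.mem_Icc, hsucc, ← hPdef, ← hpdef]
  have hmc : P * p = p * P := mul_comm P p
  have hPp : 0 < P * p := Nat.mul_pos hP hp.pos
  have hPp1 : P * p - 1 + 1 = P * p := Nat.succ_pred_eq_of_pos hPp
  constructor
  · rintro ⟨h1, h2, h3⟩
    have hcopP : Nat.gcd n P = 1 :=
      Nat.Coprime.coprime_dvd_right (dvd_mul_right _ _) h3
    have hcopp : Nat.gcd n p = 1 :=
      Nat.Coprime.coprime_dvd_right (dvd_mul_left _ _) h3
    have hnlt : n < P * p := by omega
    refine ⟨⟨n / P, ?_, n % P, ⟨?_, ?_, ?_⟩, Nat.mod_add_div' n P⟩, ?_⟩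
    · rw [Nat.div_lt_iff_lt_mul hP]
      omega
    · rcases Nat.eq_zero_or_pos (n % P) with h | h
      · exfalso
        have hdvd : P ∣ n := Nat.dvd_of_mod_eq_zero h
        have : P ∣ 1 := hcopP ▸ Nat.dvd_gcd hdvd dvd_rfl
        have := Nat.le_of_dvd one_pos this
        omega
      · exact h
    · have := Nat.mod_lt n hP
      omega
    · rw [← Nat.gcd_rec, Nat.gcd_comm]
      exact hcopP
    · rintro ⟨y, ⟨hy1, hy2⟩, hyeq⟩
      have hdvd : p ∣ n := ⟨y, hyeq.symm⟩
      have : p ∣ 1 := hcopp ▸ Nat.dvd_gcd hdvd dvd_rfl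
      have h1' := Nat.le_of_dvd one_pos this
      have := hp.two_le
      omega
  · rintro ⟨⟨x, hx, w, ⟨hw1, hw2, hw3⟩, rfl⟩, hnot⟩
    have hwlt : w < P := by omega
    have hlt : w + x * P < P * p := by
      calc w + x * P < P + x * P := Nat.add_lt_add_right hwlt _
        _ = (x + 1) * P := by ring
        _ ≤ p * P := Nat.mul_le_mul_right P hx
        _ = P * p := mul_comm _ _
    have hcopP : Nat.Coprime (w + x * P) P := (Nat.coprime_add_mul_right_left w P x).mpr hw3
    have hcopp : Nat.Coprime (w + x * P) p := by
      rw [Nat.coprime_comm, hp.coprime_iff_not_dvd]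
      rintro ⟨y, hy⟩
      apply hnot
      refine ⟨y, ⟨?_, ?_⟩, hy.symm⟩
      · rcases Nat.eq_zero_or_pos y with h | h
        · subst h; simp at hy; omega
        · exact h
      · have : p * y < P * p := hy ▸ hlt
        have hylt : y < P := by
          by_contra hcon
          push_neg at hcon
          have := Nat.mul_le_mul_left p hcon
          omega
        omega
    refine ⟨by omega, ?_, Nat.Coprime.mul_right hcopP hcopp⟩
    omega
end

section
/- Fix k_Max ∈ ℕ and for q ∈ ℕ set W'_q^{k_Max} = W'_q ∩ {0, 1, …, k_Max}. Then for every q ∈ ℕ, W'_{q+1}^{k_Max} = [ ( ⋃_{m=0}^{min(p_{q+1}−1, ⌊k_Max/Π'_q⌋)} { w + m·Π'_q : w ∈ W'_q^{k_Max} } ) \ { (p_{q+1}−3)/2 + y·p_{q+1} : y ∈ ℕ, 0 ≤ y ≤ min(Π'_q − 1, ⌊(2k_Max + 3 − p_{q+1})/(2p_{q+1})⌋) } ] ∩ {0, 1, …, k_Max}. -/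
/-- `Π'_q = Π_q / 2 = ∏_{k=1}^{q} p_k`. -/
noncomputable def primorialQ' (q : ℕ) : ℕ := ∏ k ∈ Finset.Icc 1 q, nthPrime k

/-- `W'_q = {(n−3)/2 : n ∈ W_q, n ≥ 3} ∪ {Π'_q − 1}`. -/
def wheelW' (q : ℕ) : Set ℕ :=
  {m | ∃ n ∈ wheelW q, 3 ≤ n ∧ m = (n - 3) / 2} ∪ {primorialQ' q - 1}

/-- `W'_q ∩ {0, …, k_Max}`, the truncated index wheel. -/
def wheelW'T (kMax q : ℕ) : Set ℕ := wheelW' q ∩ Set.Iic kMax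

/-! An index `x` lies in `W'_q` iff `x < Π'_q` and `2x + 3` is coprime to `Π_q = 2 Π'_q` (the extra
index `Π'_q − 1` is the one of `n = Π_q + 1`). Since `2(x + m Π'_q) + 3 ≡ 2x + 3 (mod Π_q)`, the
translates of `W'_q` by `m Π'_q`, `m < p_{q+1}`, are exactly the indices below `Π'_{q+1}` with
`2x + 3` coprime to `Π_q`; `W'_{q+1}` is obtained by removing those with `p_{q+1} ∣ 2x + 3`, i.e.
`x = (p_{q+1} − 3)/2 + y p_{q+1}`. The bounds on `m` and `y` just discard indices above `k_Max`. -/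

lemma nthPrime_prime (q : ℕ) : (nthPrime q).Prime := Nat.prime_nth_prime q

lemma three_le_nthPrime_succ (q : ℕ) : 3 ≤ nthPrime (q + 1) := by
  have h := Nat.nth_strictMono Nat.infinite_setOfPred_prime (Nat.succ_pos q)
  rwa [Nat.nth_prime_zero_eq_two] at h

lemma odd_nthPrime_succ (q : ℕ) : Odd (nthPrime (q + 1)) :=
  (nthPrime_prime (q + 1)).odd_of_ne_two (by have := three_le_nthPrime_succ q; omega)

lemma primorialQ'_pos (q : ℕ) : 0 < primorialQ' q :=
  Finset.prod_pos fun k _ => (nthPrime_prime k).pos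

lemma primorialQ_eq_two_mul (q : ℕ) : primorialQ q = 2 * primorialQ' q := by
  rw [primorialQ, Finset.prod_range_eq_mul_Ico _ (Nat.succ_pos q), nthPrime,
    Nat.nth_prime_zero_eq_two, primorialQ', ← Finset.Ico_add_one_right_eq_Icc]
  rfl

lemma primorialQ_succ (q : ℕ) : primorialQ (q + 1) = primorialQ q * nthPrime (q + 1) :=
  Finset.prod_range_succ _ _

lemma primorialQ'_succ (q : ℕ) : primorialQ' (q + 1) = primorialQ' q * nthPrime (q + 1) :=
  Finset.prod_Icc_succ_top (by omega) _

lemma mem_wheelW'_iff {q x : ℕ} :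
    x ∈ wheelW' q ↔ x < primorialQ' q ∧ Nat.Coprime (2 * x + 3) (primorialQ q) := by
  have hP := primorialQ'_pos q
  rw [primorialQ_eq_two_mul]
  constructor
  · rintro (⟨n, ⟨-, hn, hcop⟩, hn3, rfl⟩ | hx)
    · rw [primorialQ_eq_two_mul] at hn hcop
      have hodd : Odd n := (Nat.coprime_mul_iff_right.1 hcop).1.odd_of_right
      have h : 2 * ((n - 3) / 2) + 3 = n := by obtain ⟨c, rfl⟩ := hodd; omega
      exact ⟨by omega, by rwa [h]⟩
    · obtain rfl : x = primorialQ' q - 1 := hx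
      refine ⟨by omega, ?_⟩
      rw [show 2 * (primorialQ' q - 1) + 3 = 2 * primorialQ' q + 1 by omega]
      exact Nat.coprime_mul_iff_right.2 ⟨by simp, by simp⟩
  · rintro ⟨hx, hcop⟩
    by_cases hlast : x = primorialQ' q - 1
    · exact Or.inr hlast
    · refine Or.inl ⟨2 * x + 3, ⟨by omega, ?_, ?_⟩, by omega, by omega⟩
      · rw [primorialQ_eq_two_mul]; omega
      · rwa [primorialQ_eq_two_mul]

lemma coprime_two_mul_mod_add_three_iff {x P : ℕ} :
    Nat.Coprime (2 * (x % P) + 3) (2 * P) ↔ Nat.Coprime (2 * x + 3) (2 * P) := by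
  have h : 2 * x + 3 = 2 * (x % P) + 3 + x / P * (2 * P) := by
    have := Nat.mod_add_div x P
    nlinarith
  rw [h, Nat.coprime_add_mul_right_left]

lemma two_mul_add_three_dvd_iff {d x : ℕ} :
    2 * d + 3 ∣ 2 * x + 3 ↔ ∃ y, x = d + y * (2 * d + 3) := by
  constructor
  · intro hdvd
    have hle : 2 * d + 3 ≤ 2 * x + 3 := Nat.le_of_dvd (by omega) hdvd
    have h2 : 2 * d + 3 ∣ 2 * (x - d) := by
      rw [show 2 * (x - d) = 2 * x + 3 - (2 * d + 3) by omega]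
      exact Nat.dvd_sub hdvd dvd_rfl
    obtain ⟨y, hy⟩ := (Nat.Coprime.dvd_of_dvd_mul_left (by simp [parity_simps]) h2)
    exact ⟨y, by rw [mul_comm y]; omega⟩
  · rintro ⟨y, rfl⟩
    exact ⟨2 * y + 1, by ring⟩

lemma le_ediv_iff_add_mul_le {d k y : ℕ} :
    (y : ℤ) ≤ (2 * (k : ℤ) + 3 - ((2 * d + 3 : ℕ) : ℤ)) / (2 * ((2 * d + 3 : ℕ) : ℤ)) ↔
      d + y * (2 * d + 3) ≤ k := by
  rw [Int.le_ediv_iff_mul_le (by positivity)]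
  push_cast
  constructor <;> intro h <;> nlinarith

lemma exists_sieve_index_iff {p P k x : ℕ} (hp : Odd p) (hp3 : 3 ≤ p) (hx : x < P * p) :
    (∃ y : ℕ, (y ≤ P - 1 ∧ (y : ℤ) ≤ (2 * (k : ℤ) + 3 - (p : ℤ)) / (2 * (p : ℤ))) ∧
      x = (p - 3) / 2 + y * p) ↔ x ≤ k ∧ p ∣ 2 * x + 3 := by
  obtain ⟨d, rfl⟩ : ∃ d, p = 2 * d + 3 := by obtain ⟨c, rfl⟩ := hp; exact ⟨c - 1, by omega⟩
  rw [show (2 * d + 3 - 3) / 2 = d by omega, two_mul_add_three_dvd_iff]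
  simp_rw [le_ediv_iff_add_mul_le]
  constructor
  · rintro ⟨y, ⟨-, hk⟩, rfl⟩
    exact ⟨hk, y, rfl⟩
  · rintro ⟨hk, y, rfl⟩
    have : y < P := Nat.lt_of_mul_lt_mul_right (a := 2 * d + 3) (by omega)
    exact ⟨y, ⟨by omega, hk⟩, rfl⟩

lemma mem_biUnion_translates_iff {S : Set ℕ} {P n k x : ℕ} (hn : 0 < n)
    (hS : ∀ w ∈ S, w < P) (hx : x ≤ k) :
    x ∈ ⋃ m ∈ Set.Iic (min (n - 1) (k / P)), (fun w => w + m * P) '' (S ∩ Set.Iic k) ↔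
      x < P * n ∧ x % P ∈ S := by
  simp only [Set.mem_iUnion, Set.mem_image, Set.mem_inter_iff, Set.mem_Iic, le_min_iff,
    exists_prop]
  constructor
  · rintro ⟨m, ⟨hm, -⟩, w, ⟨hw, -⟩, rfl⟩
    have hwP := hS w hw
    refine ⟨?_, ?_⟩
    · nlinarith [Nat.sub_add_cancel hn]
    · rwa [Nat.add_mul_mod_self_right, Nat.mod_eq_of_lt hwP]
  · rintro ⟨hxn, hmod⟩
    have hP : 0 < P := (Nat.zero_le _).trans_lt (hS _ hmod)
    have : x / P < n := (Nat.div_lt_iff_lt_mul hP).2 (by rwa [mul_comm])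
    exact ⟨x / P, ⟨by omega, Nat.div_le_div_right hx⟩, x % P,
      ⟨hmod, (Nat.mod_le x P).trans hx⟩, Nat.mod_add_div' x P⟩

lemma mem_wheelW'_succ_iff {q x : ℕ} :
    x ∈ wheelW' (q + 1) ↔ x < primorialQ' q * nthPrime (q + 1) ∧
      Nat.Coprime (2 * x + 3) (primorialQ q) ∧ ¬ nthPrime (q + 1) ∣ 2 * x + 3 := by
  rw [mem_wheelW'_iff, primorialQ'_succ, primorialQ_succ, Nat.coprime_mul_iff_right,
    Nat.coprime_comm (m := nthPrime _), (nthPrime_prime _).coprime_iff_not_dvd]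

lemma mod_mem_wheelW'_iff {q x : ℕ} :
    x % primorialQ' q ∈ wheelW' q ↔ Nat.Coprime (2 * x + 3) (primorialQ q) := by
  rw [mem_wheelW'_iff, primorialQ_eq_two_mul, coprime_two_mul_mod_add_three_iff]
  exact and_iff_right (Nat.mod_lt _ (primorialQ'_pos q))

/-- truncated index wheel turn: for every `q`,
`W'_{q+1}^{k_Max} = [(⋃_{m=0}^{min(p_{q+1}−1, ⌊k_Max/Π'_q⌋)} (W'_q^{k_Max} + m·Π'_q))
  \ {(p_{q+1}−3)/2 + y·p_{q+1} : 0 ≤ y ≤ min(Π'_q−1, ⌊(2k_Max+3−p_{q+1})/(2p_{q+1})⌋)}]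
  ∩ {0, …, k_Max}`. -/
theorem truncated_index_wheel_turn (kMax q : ℕ) :
    wheelW'T kMax (q + 1) =
      ((⋃ m ∈ Set.Iic (min (nthPrime (q + 1) - 1) (kMax / primorialQ' q)),
          (fun w => w + m * primorialQ' q) '' wheelW'T kMax q) \
        {x | ∃ y : ℕ, (y ≤ primorialQ' q - 1 ∧
            (y : ℤ) ≤ (2 * (kMax : ℤ) + 3 - (nthPrime (q + 1) : ℤ)) /
              (2 * (nthPrime (q + 1) : ℤ))) ∧
          x = (nthPrime (q + 1) - 3) / 2 + y * nthPrime (q + 1)}) ∩ Set.Iic kMax := by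
  ext x
  unfold wheelW'T
  rw [Set.mem_inter_iff, Set.mem_inter_iff, Set.mem_sdiff, Set.mem_Iic]
  by_cases hk : x ≤ kMax
  · have hS : ∀ w ∈ wheelW' q, w < primorialQ' q := fun w hw => (mem_wheelW'_iff.1 hw).1
    rw [mem_wheelW'_succ_iff, mem_biUnion_translates_iff (nthPrime_prime _).pos hS hk,
      mod_mem_wheelW'_iff, and_iff_left hk, and_iff_left hk]
    have hsieve := fun hx : x < primorialQ' q * nthPrime (q + 1) =>
      exists_sieve_index_iff (k := kMax) (odd_nthPrime_succ q) (three_le_nthPrime_succ q) hx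
    constructor
    · rintro ⟨hx, hcop, hndvd⟩
      exact ⟨⟨hx, hcop⟩, fun h => hndvd ((hsieve hx).1 h).2⟩
    · rintro ⟨⟨hx, hcop⟩, hnot⟩
      exact ⟨hx, hcop, fun hdvd => hnot ((hsieve hx).2 ⟨hk, hdvd⟩)⟩
  · simp only [hk, and_false]
end
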